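/- Let T be the tree with k ≥ 2 children at one distinguished vertex per level and one child at all other vertices (so γ(n) = nk−(n−1), K(m,t) = mk−(m−1)). Then the spectral radius of the forward shift S on H^p(T) is 1, i.e. lim_{m→∞} ‖S^m‖^{1/m} = 1, and hence σ(S) = the closed unit disk, even though ‖S‖ = k^{1/p} > 1. -/

import Mathlib

open scoped BigOperators
open Classical

/-- An infinite, locally finite rooted tree, presented combinatorially via a
parent function and a level (distance-to-root) function.  Every level is a
finite nonempty set of vertices. -/
structure HTree where
  V : Type
  root : V
  parent : V → V
  level : V → ℕ
  level_root : level root = 0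
  root_of_level_zero : ∀ v, level v = 0 → v = root
  level_parent : ∀ v, v ≠ root → level (parent v) + 1 = level v
  finite_level : ∀ n : ℕ, {v : V | level v = n}.Finite
  nonempty_level : ∀ n : ℕ, {v : V | level v = n}.Nonempty

namespace HTree

variable (T : HTree)

/-- The finite set of vertices at level `n`. -/
noncomputable def levelFinset (n : ℕ) : Finset T.V := (T.finite_level n).toFinset

/-- `γ(n)`, the number of vertices at level `n`. -/
noncomputable def gamma (n : ℕ) : ℕ := (T.levelFinset n).card

/-- The set of `m`-children of a vertex `v`. -/
noncomputable def nChildrenFinset (m : ℕ) (v : T.V) : Finset T.V :=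
  (T.levelFinset (T.level v + m)).filter (fun w => T.parent^[m] w = v)

/-- `γ(m,v)`, the number of `m`-children of `v`. -/
noncomputable def numNChildren (m : ℕ) (v : T.V) : ℕ := (T.nChildrenFinset m v).card

/-- The set of children of a vertex. -/
noncomputable def childrenFinset (v : T.V) : Finset T.V := T.nChildrenFinset 1 v

/-- `γ(1,v)`, the number of children of `v`. -/
noncomputable def numChildren (v : T.V) : ℕ := T.numNChildren 1 v

/-- `K(m,r)`, the maximal number of `m`-children among vertices at level `r`. -/
noncomputable def K (m r : ℕ) : ℕ := (T.levelFinset r).sup (fun v => T.numNChildren m v)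

/-- `M_p^p(n,f)`, the `p`-th power of the `p`-th mean of `|f|` over level `n`. -/
noncomputable def Mpp (p : ℝ) (f : T.V → ℂ) (n : ℕ) : ℝ :=
  (1 / (T.gamma n : ℝ)) * ∑ v ∈ T.levelFinset n, ‖f v‖ ^ p

/-- `M_p(n,f)`, the `p`-th mean of `|f|` over level `n`. -/
noncomputable def Mp (p : ℝ) (f : T.V → ℂ) (n : ℕ) : ℝ := (T.Mpp p f n) ^ (1 / p)

/-- Membership in the Hardy space `H^p(T)`. -/
def MemHp (p : ℝ) (f : T.V → ℂ) : Prop := ∃ C : ℝ, ∀ n : ℕ, T.Mp p f n ≤ C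

/-- Membership in the little Hardy space `H^p_0(T)`. -/
def MemHp0 (p : ℝ) (f : T.V → ℂ) : Prop :=
  Filter.Tendsto (T.Mp p f) Filter.atTop (nhds 0)

/-- The `H^p` norm, `sup_n M_p(n,f)`. -/
noncomputable def Hnorm (p : ℝ) (f : T.V → ℂ) : ℝ := ⨆ n : ℕ, T.Mp p f n

/-- The forward shift `(Sf)(v) = f(parent v)`, `(Sf)(root) = 0`. -/
noncomputable def S (f : T.V → ℂ) : T.V → ℂ := fun v => if v = T.root then 0 else f (T.parent v)

/-- The backward shift `(Bf)(v) = Σ_{w child of v} f(w)`. -/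
noncomputable def B (f : T.V → ℂ) : T.V → ℂ := fun v => ∑ w ∈ T.childrenFinset v, f w

/-- An operator `A` is bounded on the subspace described by `Mem`, with the
`H^p` norm. -/
def BoundedOn (A : (T.V → ℂ) → (T.V → ℂ)) (Mem : (T.V → ℂ) → Prop) (p : ℝ) : Prop :=
  ∃ C : ℝ, 0 ≤ C ∧ ∀ f, Mem f → Mem (A f) ∧ T.Hnorm p (A f) ≤ C * T.Hnorm p f

/-- The operator norm of `A` on the subspace described by `Mem`. -/
noncomputable def opNorm (A : (T.V → ℂ) → (T.V → ℂ)) (Mem : (T.V → ℂ) → Prop) (p : ℝ) : ℝ :=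
  sInf {C : ℝ | 0 ≤ C ∧ ∀ f, Mem f → Mem (A f) ∧ T.Hnorm p (A f) ≤ C * T.Hnorm p f}

/-- Hypercyclicity of an operator `A` on the subspace described by `Mem`. -/
def Hypercyclic (A : (T.V → ℂ) → (T.V → ℂ)) (Mem : (T.V → ℂ) → Prop) (p : ℝ) : Prop :=
  ∃ f, Mem f ∧ ∀ g, Mem g → ∀ ε : ℝ, 0 < ε →
    ∃ N : ℕ, T.Hnorm p (fun v => A^[N] f v - g v) < ε

end HTree

/-! For every tree, `‖S^m‖^p = sup_t K(m,t) γ(t) / γ(t+m)`: `S^m` copies the value at a vertex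
of level `t` onto its `m`-children, so `M_p^p(t+m, S^m f) ≤ K(m,t) γ(t) / γ(t+m) · M_p^p(t, f)`,
with equality for the indicator of a vertex having `K(m,t)` many `m`-children. On this tree the
ratio is `(m(k-1)+1) · γ(t) / γ(t+m)`, whose supremum `m(k-1)+1` is approached as `t → ∞`.
Hence `‖S^m‖ = (m(k-1)+1)^{1/p}` grows only polynomially in `m`, and its `m`-th root tends to `1`. -/

open Filter Topology

lemma tendsto_mul_add_one_rpow_rpow_one_div {a : ℝ} (ha : 0 < a) (s : ℝ) :
    Tendsto (fun m : ℕ => (((m : ℝ) * a + 1) ^ s) ^ (1 / (m : ℝ))) atTop (𝓝 1) := by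
  have hlin : Tendsto (fun m : ℕ => (m : ℝ) * a + 1) atTop atTop :=
    tendsto_atTop_add_const_right _ 1 (tendsto_natCast_atTop_atTop.atTop_mul_const ha)
  refine ((tendsto_rpow_div_mul_add (s * a) 1 (-1) zero_ne_one).comp hlin).congr' ?_
  filter_upwards [eventually_ge_atTop 1] with m hm
  have hm' : (m : ℝ) ≠ 0 := by positivity
  rw [Function.comp_apply, ← Real.rpow_mul (by positivity)]
  congr 1
  field_simp
  ring

namespace HTree

variable {T : HTree} {p : ℝ}

lemma mem_levelFinset {n : ℕ} {v : T.V} : v ∈ T.levelFinset n ↔ T.level v = n := by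
  simp [levelFinset]

lemma levelFinset_nonempty (n : ℕ) : (T.levelFinset n).Nonempty := by
  obtain ⟨v, hv⟩ := T.nonempty_level n
  exact ⟨v, mem_levelFinset.mpr hv⟩

lemma gamma_pos (n : ℕ) : 0 < T.gamma n :=
  (levelFinset_nonempty n).card_pos

lemma level_parent_iterate_add {m : ℕ} {v : T.V} (h : m ≤ T.level v) :
    T.level (T.parent^[m] v) + m = T.level v := by
  induction m with
  | zero => rfl
  | succ n ih =>
    have hlevel := ih (by omega)
    have hne : T.parent^[n] v ≠ T.root := fun hroot => by
      rw [hroot, T.level_root] at hlevel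
      omega
    have := T.level_parent _ hne
    rw [Function.iterate_succ_apply']
    omega

lemma S_iterate_apply (m : ℕ) (f : T.V → ℂ) (v : T.V) :
    T.S^[m] f v = if T.level v < m then 0 else f (T.parent^[m] v) := by
  induction m generalizing v with
  | zero => simp
  | succ n ih =>
    rw [Function.iterate_succ_apply', S]
    by_cases hv : v = T.root
    · simp [hv, T.level_root]
    · have := T.level_parent v hv
      rw [if_neg hv, ih, Function.iterate_succ_apply]
      split_ifs <;> first | rfl | omega

lemma sum_levelFinset_comp_parent_iterate (g : T.V → ℝ) (t m : ℕ) :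
    ∑ v ∈ T.levelFinset (t + m), g (T.parent^[m] v)
      = ∑ u ∈ T.levelFinset t, T.numNChildren m u * g u := by
  have hmaps : ∀ v ∈ T.levelFinset (t + m), T.parent^[m] v ∈ T.levelFinset t := by
    intro v hv
    have hv' := mem_levelFinset.mp hv
    have := level_parent_iterate_add (m := m) (v := v) (by omega)
    exact mem_levelFinset.mpr (by omega)
  rw [← Finset.sum_fiberwise_of_maps_to hmaps]
  refine Finset.sum_congr rfl fun u hu => ?_
  have hfiber : {v ∈ T.levelFinset (t + m) | T.parent^[m] v = u} = T.nChildrenFinset m u := by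
    rw [nChildrenFinset, mem_levelFinset.mp hu]
  rw [Finset.sum_congr rfl fun v hv => congrArg g (Finset.mem_filter.mp hv).2, hfiber,
    Finset.sum_const, numNChildren, nsmul_eq_mul]

lemma Mpp_nonneg (f : T.V → ℂ) (n : ℕ) : 0 ≤ T.Mpp p f n :=
  mul_nonneg (by positivity) (Finset.sum_nonneg fun _ _ => by positivity)

lemma Mp_nonneg (f : T.V → ℂ) (n : ℕ) : 0 ≤ T.Mp p f n :=
  Real.rpow_nonneg (Mpp_nonneg f n) _

lemma Mp_le_Hnorm {f : T.V → ℂ} (hf : T.MemHp p f) (n : ℕ) : T.Mp p f n ≤ T.Hnorm p f := by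
  obtain ⟨C, hC⟩ := hf
  exact le_ciSup ⟨C, Set.forall_mem_range.mpr hC⟩ n

lemma Hnorm_nonneg {f : T.V → ℂ} (hf : T.MemHp p f) : 0 ≤ T.Hnorm p f :=
  (Mp_nonneg f 0).trans (Mp_le_Hnorm hf 0)

lemma Mpp_S_iterate_add (f : T.V → ℂ) (t m : ℕ) :
    T.Mpp p (T.S^[m] f) (t + m)
      = 1 / T.gamma (t + m) * ∑ u ∈ T.levelFinset t, T.numNChildren m u * ‖f u‖ ^ p := by
  rw [Mpp, ← sum_levelFinset_comp_parent_iterate (fun u => ‖f u‖ ^ p)]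
  refine congrArg _ (Finset.sum_congr rfl fun v hv => ?_)
  rw [S_iterate_apply, if_neg (by rw [mem_levelFinset.mp hv]; omega)]

lemma Mp_S_iterate_of_lt (hp : 0 < p) (f : T.V → ℂ) {m n : ℕ} (hn : n < m) :
    T.Mp p (T.S^[m] f) n = 0 := by
  have hsum : ∑ v ∈ T.levelFinset n, ‖T.S^[m] f v‖ ^ p = 0 :=
    Finset.sum_eq_zero fun v hv => by
      rw [S_iterate_apply, if_pos (by rw [mem_levelFinset.mp hv]; exact hn), norm_zero,
        Real.zero_rpow hp.ne']
  rw [Mp, Mpp, hsum, mul_zero, Real.zero_rpow (by positivity)]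

noncomputable def shiftRatio (T : HTree) (m t : ℕ) : ℝ := T.K m t * T.gamma t / T.gamma (t + m)

lemma shiftRatio_nonneg (m t : ℕ) : 0 ≤ T.shiftRatio m t := by
  unfold shiftRatio; positivity

lemma Mpp_S_iterate_add_le (f : T.V → ℂ) (t m : ℕ) :
    T.Mpp p (T.S^[m] f) (t + m) ≤ T.shiftRatio m t * T.Mpp p f t := by
  have hsum : ∑ u ∈ T.levelFinset t, (T.numNChildren m u : ℝ) * ‖f u‖ ^ p
      ≤ T.K m t * ∑ u ∈ T.levelFinset t, ‖f u‖ ^ p := by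
    rw [Finset.mul_sum]
    exact Finset.sum_le_sum fun u hu =>
      mul_le_mul_of_nonneg_right (by exact_mod_cast Finset.le_sup hu) (by positivity)
  have hγ : (T.gamma t : ℝ) ≠ 0 := by exact_mod_cast (gamma_pos t).ne'
  calc T.Mpp p (T.S^[m] f) (t + m)
      ≤ 1 / T.gamma (t + m) * (T.K m t * ∑ u ∈ T.levelFinset t, ‖f u‖ ^ p) := by
        rw [Mpp_S_iterate_add]; gcongr
    _ = T.shiftRatio m t * T.Mpp p f t := by
        rw [shiftRatio, Mpp]; field_simp


lemma Mp_S_iterate_le (hp : 0 < p) {m : ℕ} {R : ℝ} (hR : ∀ t, T.shiftRatio m t ≤ R)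
    {f : T.V → ℂ} (hf : T.MemHp p f) (n : ℕ) :
    T.Mp p (T.S^[m] f) n ≤ R ^ (1 / p) * T.Hnorm p f := by
  have hR0 : 0 ≤ R := (shiftRatio_nonneg m 0).trans (hR 0)
  rcases lt_or_ge n m with hn | hn
  · rw [Mp_S_iterate_of_lt hp f hn]
    exact mul_nonneg (by positivity) (Hnorm_nonneg hf)
  obtain ⟨t, rfl⟩ : ∃ t, n = t + m := ⟨n - m, by omega⟩
  calc T.Mp p (T.S^[m] f) (t + m)
      ≤ (R * T.Mpp p f t) ^ (1 / p) := by
        unfold Mp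
        gcongr
        · exact Mpp_nonneg _ _
        exact (Mpp_S_iterate_add_le f t m).trans
          (mul_le_mul_of_nonneg_right (hR t) (Mpp_nonneg f t))
    _ = R ^ (1 / p) * T.Mp p f t := Real.mul_rpow hR0 (Mpp_nonneg f t)
    _ ≤ R ^ (1 / p) * T.Hnorm p f := by gcongr; exact Mp_le_Hnorm hf t

lemma norm_single_one_rpow (hp : p ≠ 0) (u v : T.V) :
    ‖(Pi.single u 1 : T.V → ℂ) v‖ ^ p = (Pi.single u 1 : T.V → ℝ) v := by
  by_cases h : v = u
  · subst h; simp
  · simp [h, Real.zero_rpow hp]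

lemma Mp_single_le (hp : 0 < p) (u : T.V) (n : ℕ) :
    T.Mp p (Pi.single u 1) n ≤ ((T.gamma (T.level u) : ℝ)⁻¹) ^ (1 / p) := by
  unfold Mp Mpp
  gcongr
  simp only [norm_single_one_rpow hp.ne', Finset.sum_pi_single', mem_levelFinset]
  split_ifs with h
  · rw [h, one_div, mul_one]
  · rw [mul_zero]; positivity

lemma memHp_single (hp : 0 < p) (u : T.V) : T.MemHp p (Pi.single u 1) :=
  ⟨_, Mp_single_le hp u⟩

lemma Hnorm_single_le (hp : 0 < p) (u : T.V) :
    T.Hnorm p (Pi.single u 1) ≤ ((T.gamma (T.level u) : ℝ)⁻¹) ^ (1 / p) :=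
  ciSup_le (Mp_single_le hp u)

lemma Mpp_S_iterate_single (hp : 0 < p) (u : T.V) (m : ℕ) :
    T.Mpp p (T.S^[m] (Pi.single u 1)) (T.level u + m)
      = T.numNChildren m u / T.gamma (T.level u + m) := by
  have hu : u ∈ T.levelFinset (T.level u) := mem_levelFinset.mpr rfl
  simp_rw [Mpp_S_iterate_add, norm_single_one_rpow hp.ne', Pi.single_apply, mul_ite, mul_one,
    mul_zero, Finset.sum_ite_eq', if_pos hu, one_div, inv_mul_eq_div]

lemma shiftRatio_rpow_le (hp : 0 < p) {m : ℕ} {C : ℝ} (hC0 : 0 ≤ C)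
    (hC : ∀ f, T.MemHp p f → T.MemHp p (T.S^[m] f) ∧ T.Hnorm p (T.S^[m] f) ≤ C * T.Hnorm p f)
    (t : ℕ) : T.shiftRatio m t ^ (1 / p) ≤ C := by
  obtain ⟨u, hu, hKu⟩ :=
    Finset.exists_mem_eq_sup _ (levelFinset_nonempty t) (T.numNChildren m)
  have hlevel : T.level u = t := mem_levelFinset.mp hu
  obtain ⟨hmem, hnorm⟩ := hC _ (memHp_single hp u)
  have hγ : (0 : ℝ) < T.gamma t := by exact_mod_cast gamma_pos t
  calc T.shiftRatio m t ^ (1 / p)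
      = (T.numNChildren m u / T.gamma (t + m) : ℝ) ^ (1 / p) * (T.gamma t : ℝ) ^ (1 / p) := by
        rw [← Real.mul_rpow (by positivity) hγ.le, shiftRatio, K, hKu, mul_div_right_comm]
    _ = T.Mp p (T.S^[m] (Pi.single u 1)) (t + m) * (T.gamma t : ℝ) ^ (1 / p) := by
        rw [Mp, ← hlevel, Mpp_S_iterate_single hp]
    _ ≤ C * T.Hnorm p (Pi.single u 1) * (T.gamma t : ℝ) ^ (1 / p) := by
        gcongr
        exact (Mp_le_Hnorm hmem _).trans hnorm
    _ ≤ C * ((T.gamma t : ℝ)⁻¹) ^ (1 / p) * (T.gamma t : ℝ) ^ (1 / p) := by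
        gcongr
        exact hlevel ▸ Hnorm_single_le hp u
    _ = C := by
        rw [mul_assoc, ← Real.mul_rpow (by positivity) hγ.le, inv_mul_cancel₀ hγ.ne',
          Real.one_rpow, mul_one]

theorem opNorm_S_iterate (hp : 0 < p) {m : ℕ} {R : ℝ}
    (hR : IsLUB (Set.range (T.shiftRatio m)) R) :
    T.opNorm (T.S^[m]) (T.MemHp p) p = R ^ (1 / p) := by
  have hbound : ∀ t, T.shiftRatio m t ≤ R := fun t => hR.1 ⟨t, rfl⟩
  have hR0 : 0 ≤ R := (shiftRatio_nonneg m 0).trans (hbound 0)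
  refine IsLeast.csInf_eq ⟨⟨by positivity, fun f hf =>
    ⟨⟨_, Mp_S_iterate_le hp hbound hf⟩, ciSup_le (Mp_S_iterate_le hp hbound hf)⟩⟩, ?_⟩
  rintro C ⟨hC0, hC⟩
  rw [one_div, Real.rpow_inv_le_iff_of_pos hR0 hC0 hp]
  refine hR.2 (Set.forall_mem_range.mpr fun t => ?_)
  rw [← Real.rpow_inv_le_iff_of_pos (shiftRatio_nonneg m t) hC0 hp, ← one_div]
  exact shiftRatio_rpow_le hp hC0 hC t

lemma isLUB_range_shiftRatio {c m : ℕ} (hgamma : ∀ n, T.gamma n = n * c + 1)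
    (hK : ∀ t, T.K m t = m * c + 1) :
    IsLUB (Set.range (T.shiftRatio m)) ((m : ℝ) * c + 1) := by
  have hratio : ∀ t : ℕ, T.shiftRatio m t
      = ((m : ℝ) * c + 1) * ((t * c + 1) / ((t + m) * c + 1)) := by
    intro t
    rw [shiftRatio, hK, hgamma, hgamma]
    push_cast
    ring
  refine ⟨Set.forall_mem_range.mpr fun t => ?_, fun b hb => ?_⟩
  · rw [hratio]
    refine mul_le_of_le_one_right (by positivity) ((div_le_one (by positivity)).mpr ?_)
    gcongr
    exact le_add_of_nonneg_right (Nat.cast_nonneg m)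
  · have htendsto := (tendsto_natCast_div_add_atTop (m : ℝ)).const_mul ((m : ℝ) * c + 1)
    rw [mul_one] at htendsto
    refine le_of_tendsto htendsto ((eventually_ge_atTop 1).mono fun t ht => ?_)
    refine le_trans ?_ (hb ⟨t, rfl⟩)
    have ht' : (1 : ℝ) ≤ t := by exact_mod_cast ht
    rw [hratio]
    refine mul_le_mul_of_nonneg_left ?_ (by positivity)
    rw [div_le_div_iff₀ (by positivity) (by positivity)]
    nlinarith [Nat.cast_nonneg (α := ℝ) m, Nat.cast_nonneg (α := ℝ) c]

end HTree

/-- on the tree with one distinguished `k`-branching vertex per level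
(`γ(n) = nk−(n−1)`, `K(m,t) = mk−(m−1)`), the forward shift has norm `k^{1/p} > 1`
but spectral radius `lim_m ‖S^m‖^{1/m} = 1`. -/
theorem spectral_radius_one_example (T : HTree) (p : ℝ) (hp : 1 ≤ p)
    (k : ℕ) (hk : 2 ≤ k)
    (hgamma : ∀ n : ℕ, T.gamma n = n * (k - 1) + 1)
    (hK : ∀ m t : ℕ, 1 ≤ m → T.K m t = m * (k - 1) + 1) :
    T.opNorm T.S (T.MemHp p) p = (k : ℝ) ^ (1 / p) ∧
    1 < T.opNorm T.S (T.MemHp p) p ∧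
    Filter.Tendsto (fun m : ℕ => (T.opNorm ((T.S)^[m]) (T.MemHp p) p) ^ ((1 : ℝ) / m))
      Filter.atTop (nhds 1) := by
  have hp0 : 0 < p := by linarith
  have hnorm : ∀ m, 1 ≤ m →
      T.opNorm (T.S^[m]) (T.MemHp p) p = ((m : ℝ) * (k - 1 : ℕ) + 1) ^ (1 / p) := fun m hm =>
    HTree.opNorm_S_iterate hp0 (HTree.isLUB_range_shiftRatio hgamma (fun t => hK m t hm))
  have hS : T.opNorm T.S (T.MemHp p) p = (k : ℝ) ^ (1 / p) := by
    rw [← Function.iterate_one T.S, hnorm 1 le_rfl, Nat.cast_one, one_mul,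
      Nat.cast_sub (by omega), Nat.cast_one, sub_add_cancel]
  refine ⟨hS, ?_, ?_⟩
  · rw [hS]
    exact Real.one_lt_rpow (by exact_mod_cast hk) (by positivity)
  · have hc : (0 : ℝ) < (k - 1 : ℕ) := by exact_mod_cast (by omega : 0 < k - 1)
    refine (tendsto_mul_add_one_rpow_rpow_one_div hc (1 / p)).congr' ?_
    filter_upwards [eventually_ge_atTop 1] with m hm
    rw [hnorm m hm]
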